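/- arXiv:2302.05308 — 5 statements merged into one kernel-verified Lean document; each statement's English description precedes it below -/
import Mathlib

section
/- Let V be a finite set, let G be a simple graph on V, and let A be a Hermitian matrix with rows and columns indexed by V such that A(u,v) = 0 whenever u ≠ v and u, v are not adjacent in G, and A(v,v) = 0 for every vertex v. Let n₊, n₋, n₀ denote the number of positive, negative and zero eigenvalues of A respectively, counted with multiplicity. Then the independence number of G satisfies α(G) ≤ min(n₊, n₋) + n₀. -/
/-!
Sylvester-type inertia bound. An independent set `s` of `G` spans a subspace of dimension `#s`
on which the Hermitian form `x ↦ ⟪x, A x⟫` vanishes identically. Writing the form in an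
orthonormal eigenbasis as `∑ μᵢ ‖⟪uᵢ, x⟫‖²`, a vector of that subspace whose coordinates along
the eigenvectors with `μᵢ ≥ 0` vanish is a sum of nonpositive terms equal to zero, hence is zero.
So the subspace embeds into the span of those coordinates and `#s ≤ n₊ + n₀`; applying the same
to `-A` gives `#s ≤ n₋ + n₀`.
-/

/-- The independence number of a graph: the supremum of sizes of independent sets. -/
noncomputable def alphaNum {V : Type*} (G : SimpleGraph V) : ℕ :=
  sSup {k | ∃ s : Finset V, (∀ u ∈ s, ∀ v ∈ s, ¬ G.Adj u v) ∧ s.card = k}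

open Finset Matrix Module
open scoped InnerProductSpace

section
variable {𝕜 E ι : Type*} [RCLike 𝕜] [NormedAddCommGroup E] [InnerProductSpace 𝕜 E] [Fintype ι]
  {T : E →ₗ[𝕜] E} {u : OrthonormalBasis ι 𝕜 E} {μ : ι → ℝ}

theorem OrthonormalBasis.inner_apply_self_eq_sum (hu : ∀ i, T (u i) = (μ i : 𝕜) • u i) (x : E) :
    ⟪x, T x⟫_𝕜 = ((∑ i, μ i * ‖⟪u i, x⟫_𝕜‖ ^ 2 : ℝ) : 𝕜) := by
  have hcoord : ∀ i, ⟪u i, T x⟫_𝕜 = ⟪u i, x⟫_𝕜 * μ i := by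
    intro i
    conv_lhs => rw [← u.sum_repr' x]
    simp only [map_sum, map_smul, hu, smul_smul, u.orthonormal.inner_right_fintype]
  rw [← u.sum_inner_mul_inner x (T x)]
  push_cast
  refine sum_congr rfl fun i _ => ?_
  rw [hcoord, ← inner_conj_symm, ← mul_assoc, RCLike.conj_mul, mul_comm]

theorem OrthonormalBasis.eq_zero_of_inner_apply_self_eq_zero
    (hu : ∀ i, T (u i) = (μ i : 𝕜) • u i) {x : E} (hx : ⟪x, T x⟫_𝕜 = 0)
    (hnonneg : ∀ i, 0 ≤ μ i → ⟪u i, x⟫_𝕜 = 0) : x = 0 := by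
  have hsum : ∑ i, μ i * ‖⟪u i, x⟫_𝕜‖ ^ 2 = 0 := by
    exact_mod_cast (u.inner_apply_self_eq_sum hu x).symm.trans hx
  have hterm_nonpos : ∀ i ∈ univ, μ i * ‖⟪u i, x⟫_𝕜‖ ^ 2 ≤ 0 := fun i _ => by
    rcases le_or_gt 0 (μ i) with hi | hi
    · simp [hnonneg i hi]
    · exact mul_nonpos_of_nonpos_of_nonneg hi.le (sq_nonneg _)
  have hcoord : ∀ i, ⟪u i, x⟫_𝕜 = 0 := fun i => by
    rcases le_or_gt 0 (μ i) with hi | hi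
    · exact hnonneg i hi
    · have := (sum_eq_zero_iff_of_nonpos hterm_nonpos).1 hsum i (mem_univ i)
      simpa [hi.ne] using this
  rw [← u.sum_repr' x]
  simp [hcoord]

theorem OrthonormalBasis.finrank_le_card_nonneg_of_isotropic
    (hu : ∀ i, T (u i) = (μ i : 𝕜) • u i) (W : Submodule 𝕜 E)
    (hW : ∀ x ∈ W, ⟪x, T x⟫_𝕜 = 0) : finrank 𝕜 W ≤ #{i | 0 ≤ μ i} := by
  let coords : W →ₗ[𝕜] {i // 0 ≤ μ i} → 𝕜 :=
    LinearMap.pi fun i => innerₛₗ 𝕜 (u i) ∘ₗ W.subtype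
  have hinj : Function.Injective coords := by
    rw [← LinearMap.ker_eq_bot, LinearMap.ker_eq_bot']
    intro x hx
    exact Subtype.ext <| u.eq_zero_of_inner_apply_self_eq_zero hu (hW x x.2)
      fun i hi => congr_fun hx ⟨i, hi⟩
  simpa [Fintype.card_subtype] using LinearMap.finrank_le_finrank_of_injective hinj
end

theorem Finset.card_filter_nonneg_eq {ι : Type*} [Fintype ι] (f : ι → ℝ) :
    #{i | 0 ≤ f i} = #{i | 0 < f i} + #{i | f i = 0} := by
  classical
  rw [← card_union_of_disjoint (disjoint_filter.2 fun i _ h h' => h.ne' h'), ← filter_or]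
  simp only [le_iff_lt_or_eq, eq_comm]

theorem Matrix.dotProduct_mulVec_eq_zero_of_support_subset {V R : Type*} [Fintype V]
    [NonUnitalNonAssocSemiring R] {A : Matrix V V R} {s : Finset V}
    (hA : ∀ a ∈ s, ∀ b ∈ s, A a b = 0) {x y : V → R} (hx : ∀ w ∉ s, x w = 0)
    (hy : ∀ w ∉ s, y w = 0) : x ⬝ᵥ A *ᵥ y = 0 := by
  refine sum_eq_zero fun a _ => ?_
  by_cases ha : a ∈ s
  · suffices (A *ᵥ y) a = 0 by rw [this, mul_zero]
    refine sum_eq_zero fun b _ => ?_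
    by_cases hb : b ∈ s
    · exact (congrArg (· * y b) (hA a ha b hb)).trans (zero_mul _)
    · rw [hy b hb, mul_zero]
  · rw [hx a ha, zero_mul]

theorem Matrix.exists_isotropic_submodule_finrank_eq {𝕜 V : Type*} [RCLike 𝕜] [Fintype V]
    [DecidableEq V] {A : Matrix V V 𝕜} {s : Finset V} (hA : ∀ a ∈ s, ∀ b ∈ s, A a b = 0) :
    ∃ W : Submodule 𝕜 (EuclideanSpace 𝕜 V),
      finrank 𝕜 W = #s ∧ ∀ x ∈ W, ⟪x, toEuclideanLin A x⟫_𝕜 = 0 := by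
  let extendByZero : (s → 𝕜) →ₗ[𝕜] EuclideanSpace 𝕜 V :=
    (WithLp.linearEquiv 2 𝕜 (V → 𝕜)).symm.toLinearMap ∘ₗ
      Function.ExtendByZero.linearMap 𝕜 ((↑) : s → V)
  have hinj : Function.Injective extendByZero :=
    (WithLp.linearEquiv 2 𝕜 (V → 𝕜)).symm.injective.comp
      (Function.extend_injective Subtype.val_injective (0 : V → 𝕜))
  refine ⟨LinearMap.range extendByZero, ?_, ?_⟩
  · rw [LinearMap.finrank_range_of_inj hinj, finrank_fintype_fun_eq_card, Fintype.card_coe]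
  · rintro _ ⟨c, rfl⟩
    have hsupp : ∀ w ∉ s, (extendByZero c).ofLp w = 0 := fun w hw =>
      Function.extend_apply' _ _ _ fun ⟨a, ha⟩ => hw (ha ▸ a.2)
    rw [EuclideanSpace.inner_eq_star_dotProduct, Matrix.ofLp_toLpLin, dotProduct_comm]
    refine dotProduct_mulVec_eq_zero_of_support_subset hA (fun w hw => ?_) hsupp
    simp [hsupp w hw]

theorem Matrix.IsHermitian.toEuclideanLin_eigenvectorBasis {𝕜 V : Type*} [RCLike 𝕜] [Fintype V]
    [DecidableEq V] {A : Matrix V V 𝕜} (hA : A.IsHermitian) (i : V) :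
    toEuclideanLin A (hA.eigenvectorBasis i) =
      (hA.eigenvalues i : 𝕜) • hA.eigenvectorBasis i := by
  apply WithLp.ofLp_injective 2
  rw [Matrix.ofLp_toLpLin, toLin'_apply, hA.mulVec_eigenvectorBasis i, WithLp.ofLp_smul,
    RCLike.real_smul_eq_coe_smul (K := 𝕜)]

theorem Matrix.IsHermitian.card_le_min_add_card_eigenvalues_eq_zero {𝕜 V : Type*} [RCLike 𝕜]
    [Fintype V] [DecidableEq V] {A : Matrix V V 𝕜} (hA : A.IsHermitian) {s : Finset V}
    (hs : ∀ a ∈ s, ∀ b ∈ s, A a b = 0) :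
    #s ≤ min #{i | 0 < hA.eigenvalues i} #{i | hA.eigenvalues i < 0} +
      #{i | hA.eigenvalues i = 0} := by
  obtain ⟨W, hW, hiso⟩ := exists_isotropic_submodule_finrank_eq hs
  have hnonneg : #s ≤ #{i | 0 ≤ hA.eigenvalues i} :=
    hW ▸ hA.eigenvectorBasis.finrank_le_card_nonneg_of_isotropic
      hA.toEuclideanLin_eigenvectorBasis W hiso
  have hnonpos : #s ≤ #{i | 0 ≤ -hA.eigenvalues i} :=
    hW ▸ hA.eigenvectorBasis.finrank_le_card_nonneg_of_isotropic (T := toEuclideanLin (-A))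
      (fun i => by simp [hA.toEuclideanLin_eigenvectorBasis i, neg_smul])
      W (fun x hx => by simp [hiso x hx])
  rw [card_filter_nonneg_eq] at hnonneg hnonpos
  simp only [neg_pos, neg_eq_zero] at hnonpos
  omega

/-- For a Hermitian matrix `A` associated to a simple graph `G` (entries vanish off the
edges of `G`, including the diagonal), the independence number of `G` is at most
`min(n₊, n₋) + n₀`, where `n₊, n₋, n₀` count positive, negative, zero eigenvalues of `A`. -/
theorem stmt_0 {V : Type*} [Fintype V] [DecidableEq V]
    (G : SimpleGraph V) (A : Matrix V V ℂ) (hA : A.IsHermitian)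
    (hoff : ∀ u v : V, u ≠ v → ¬ G.Adj u v → A u v = 0)
    (hdiag : ∀ v : V, A v v = 0) :
    alphaNum G ≤
      min (Finset.univ.filter fun v => 0 < hA.eigenvalues v).card
          (Finset.univ.filter fun v => hA.eigenvalues v < 0).card
      + (Finset.univ.filter fun v => hA.eigenvalues v = 0).card := by
  refine csSup_le ⟨0, ∅, by simp⟩ ?_
  rintro _ ⟨s, hind, rfl⟩
  refine hA.card_le_min_add_card_eigenvalues_eq_zero fun a ha b hb => ?_
  rcases eq_or_ne a b with rfl | hne
  · exact hdiag a
  · exact hoff a b hne (hind a ha b hb)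
end

section
/- Let D be a finite nonempty set of positive integers. Then for every positive integer n and every integer m ≥ max(D), the independence numbers of circulant graphs satisfy α(G_{n+m}(D)) ≥ α(G_n(D)). -/
/-- The circulant graph on `ℤ/nℤ` with set of distances `D`: distinct `u, v` are adjacent
iff `v - u` or `u - v` is congruent to some `d ∈ D` modulo `n`. -/
def circ (D : Finset ℕ) (n : ℕ) : SimpleGraph (ZMod n) :=
  SimpleGraph.fromRel (fun u v => ∃ d ∈ D, v - u = (d : ZMod n))

/-- For every positive integer `n` and every `m ≥ max(D)`, `α(G_{n+m}(D)) ≥ α(G_n(D))`. -/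
theorem stmt_3 (D : Finset ℕ) (hne : D.Nonempty) (hpos : ∀ d ∈ D, 0 < d)
    (n m : ℕ) (hn : 0 < n) (hm : ∀ d ∈ D, d ≤ m) :
    alphaNum (circ D n) ≤ alphaNum (circ D (n + m)) := by
  haveI : NeZero n := ⟨hn.ne'⟩
  haveI : NeZero (n + m) := ⟨by omega⟩
  set f : ZMod n → ZMod (n + m) := fun x => ((x.val : ℕ) : ZMod (n + m)) with hf
  have hinj : Function.Injective f := by
    intro a b h
    have ha := ZMod.val_lt a
    have hb := ZMod.val_lt b
    have := congrArg ZMod.val h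
    simp only [hf] at this
    rw [ZMod.val_cast_of_lt (by omega), ZMod.val_cast_of_lt (by omega)] at this
    exact ZMod.val_injective n this
  -- helper: a detected difference d in ZMod (n+m) gives the same in ZMod n
  have key : ∀ a b : ZMod n, ∀ d ∈ D, f b - f a = (d : ZMod (n + m)) →
      b - a = (d : ZMod n) := by
    intro a b d hd heq
    have hdm : d ≤ m := hm d hd
    have hd0 : 0 < d := hpos d hd
    have ha := ZMod.val_lt a
    have hb := ZMod.val_lt b
    have h0 : (((b.val : ℤ) - a.val - d : ℤ) : ZMod (n + m)) = 0 := by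
      push_cast
      rw [show ((b.val : ZMod (n+m)) - a.val : ZMod (n+m)) = (d : ZMod (n+m)) from heq]
      ring
    have hdvd : ((n + m : ℕ) : ℤ) ∣ ((b.val : ℤ) - a.val - d) :=
      (ZMod.intCast_zmod_eq_zero_iff_dvd _ _).mp h0
    have hzero : (b.val : ℤ) - a.val - d = 0 := by
      refine Int.eq_zero_of_abs_lt_dvd hdvd ?_
      rw [abs_lt]
      constructor <;> push_cast <;> omega
    have hval : (b.val : ℤ) = a.val + d := by omega
    have : ((b.val : ℤ) : ZMod n) = ((a.val : ℤ) : ZMod n) + ((d : ℤ) : ZMod n) := by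
      rw [hval]; push_cast; ring
    push_cast at this
    simp only [ZMod.natCast_val, ZMod.cast_id] at this
    linear_combination this
  have key' : ∀ a b : ZMod n, ∀ d ∈ D, f b - f a = (d : ZMod (n + m)) →
      b - a = (d : ZMod n) := key
  apply csSup_le_csSup
  · refine ⟨n + m, ?_⟩
    rintro k ⟨s, -, rfl⟩
    have := Finset.card_le_univ s
    simpa using this.trans_eq (by simp [ZMod.card])
  · exact ⟨0, ∅, by simp⟩
  · rintro k ⟨s, hs, rfl⟩
    refine ⟨s.image f, ?_, Finset.card_image_of_injective s hinj⟩
    intro u' hu' v' hv' hadj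
    obtain ⟨u, hu, rfl⟩ := Finset.mem_image.mp hu'
    obtain ⟨v, hv, rfl⟩ := Finset.mem_image.mp hv'
    obtain ⟨hne', hor⟩ := hadj
    refine hs u hu v hv ?_
    refine ⟨fun h => hne' (congrArg f h), ?_⟩
    rcases hor with ⟨d, hd, heq⟩ | ⟨d, hd, heq⟩
    · exact Or.inl ⟨d, hd, key u v d hd heq⟩
    · exact Or.inr ⟨d, hd, key v u d hd heq⟩
end

section
/- Let a ≤ b be positive integers and let D = {a, a+1, …, b} be the set of consecutive integers from a to b. Then sup over all n ≥ 1 of α(G_n(D))/n is at least a/(a+b). -/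
lemma alphaNum_le_card {V : Type*} [Fintype V] (G : SimpleGraph V) :
    alphaNum G ≤ Fintype.card V := by
  refine csSup_le ⟨0, ∅, by simp, rfl⟩ ?_
  rintro k ⟨s, -, rfl⟩
  exact s.card_le_univ.trans_eq (Finset.card_univ)

lemma key_ne (a b x y d : ℕ) (hx : x < a) (hy : y < a)
    (hd1 : a ≤ d) (hd2 : d ≤ b) : (y : ZMod (a+b)) - x ≠ d := by
  haveI : NeZero (a + b) := ⟨by omega⟩
  intro h
  have h2 : (y : ZMod (a+b)) = ((d + x : ℕ) : ZMod (a+b)) := by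
    push_cast
    linear_combination h
  have h3 := congrArg ZMod.val h2
  rw [ZMod.val_cast_of_lt (by omega), ZMod.val_cast_of_lt (by omega)] at h3
  omega

/-- For `D = {a, a+1, …, b}` with `0 < a ≤ b`,
`sup_{n ≥ 1} α(G_n(D))/n ≥ a/(a+b)`. -/
theorem stmt_5 (a b : ℕ) (ha : 0 < a) (hab : a ≤ b) :
    (a : ℝ) / (a + b) ≤
      ⨆ n : ℕ+, (alphaNum (circ (Finset.Icc a b) n) : ℝ) / (n : ℕ) := by
  have hbdd : BddAbove (Set.range fun n : ℕ+ =>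
      (alphaNum (circ (Finset.Icc a b) n) : ℝ) / (n : ℕ)) := by
    refine ⟨1, ?_⟩
    rintro x ⟨n, rfl⟩
    have h1 : alphaNum (circ (Finset.Icc a b) n) ≤ (n : ℕ) := by
      haveI : NeZero (n : ℕ) := ⟨n.pos.ne'⟩
      simpa [ZMod.card] using alphaNum_le_card (circ (Finset.Icc a b) n)
    have hn : (0 : ℝ) < (n : ℕ) := by exact_mod_cast n.pos
    rw [div_le_one hn]
    exact_mod_cast h1
  refine le_ciSup_of_le hbdd ⟨a + b, by omega⟩ ?_
  show (a : ℝ) / (a + b) ≤ (alphaNum (circ (Finset.Icc a b) (a + b)) : ℝ) / ((a + b : ℕ) : ℝ)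
  have hm : (0 : ℝ) < ((a : ℝ) + b) := by positivity
  rw [div_le_div_iff₀ hm (by exact_mod_cast hm)]
  have key : (a : ℕ) ≤ alphaNum (circ (Finset.Icc a b) (a + b)) := by
    set G := circ (Finset.Icc a b) (a + b) with hG
    haveI : NeZero (a + b) := ⟨by omega⟩
    apply le_csSup
    · refine ⟨Fintype.card (ZMod (a+b)), ?_⟩
      rintro k ⟨s, -, rfl⟩
      exact s.card_le_univ.trans_eq (Finset.card_univ)
    · refine ⟨(Finset.range a).image (fun x : ℕ => (x : ZMod (a+b))), ?_, ?_⟩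
      · rintro u hu v hv hadj
        simp only [Finset.mem_image, Finset.mem_range] at hu hv
        obtain ⟨x, hx, rfl⟩ := hu
        obtain ⟨y, hy, rfl⟩ := hv
        rw [hG, circ, SimpleGraph.fromRel_adj] at hadj
        obtain ⟨-, hadj⟩ := hadj
        rcases hadj with ⟨d, hd, h⟩ | ⟨d, hd, h⟩ <;>
          simp only [Finset.mem_Icc] at hd
        · exact key_ne a b x y d hx hy hd.1 hd.2 h
        · exact key_ne a b y x d hy hx hd.1 hd.2 h
      · rw [Finset.card_image_of_injOn, Finset.card_range]
        intro x hx y hy hxy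
        simp only [Finset.coe_range, Set.mem_Iio] at hx hy
        have := congrArg ZMod.val hxy
        rwa [ZMod.val_cast_of_lt (by omega), ZMod.val_cast_of_lt (by omega)] at this
  push_cast
  have : (a : ℝ) ≤ alphaNum (circ (Finset.Icc a b) (a + b)) := by exact_mod_cast key
  nlinarith
end

section
/- Let m ≥ 1 and let D be a finite nonempty subset of ℤ^m \ {0} with D = −D. For coefficients c : D → ℂ satisfying c_{−d} = conj(c_d) for all d ∈ D, the function f_c(θ₁, …, θ_m) = Σ_{d ∈ D} c_d e^{i(d₁θ₁ + … + d_mθ_m)} is real-valued. Then the function sending the coefficient vector c to ρ₋(f_c) = (1/(2π)^m)·λ_m{θ ∈ [0,2π)^m : f_c(θ) < 0} is continuous at every nonzero coefficient vector c (within the set of coefficient vectors satisfying c_{−d} = conj(c_d)). -/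
/-!
Write `f_c = ∑_{d ∈ D} c_d e^{i⟨d,θ⟩}`. As `c' → c`, `f_{c'} → f_c` pointwise, so the indicators
of `{f_{c'} < 0}` converge to that of `{f_c < 0}` off the zero set of `f_c`; by dominated
convergence on the box the measures converge once that zero set is null. Since `f_c` is real,
its zero set is that of a trigonometric polynomial with a nonzero coefficient, which is null by
induction on `m` and Fubini: slicing off the first coordinate leaves, for all but countably many
values of it, a trigonometric polynomial in the other coordinates with a nonzero coefficient. In
one variable the zeros are countable because `e^{iNt} ∑ c_n e^{int}` is a nonzero polynomial in
`e^{it}`.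
-/

open MeasureTheory ComplexConjugate
open scoped Real
open Complex LaurentPolynomial Filter

theorem countable_setOf_cexp_mul_I_eq (z : ℂ) : {t : ℝ | cexp (I * t) = z}.Countable := by
  rcases Set.eq_empty_or_nonempty {t : ℝ | cexp (I * t) = z} with h | ⟨t₀, rfl⟩
  · simp [h]
  refine (Set.countable_range fun k : ℤ => t₀ + k * (2 * π)).mono fun t ht => ?_
  obtain ⟨k, hk⟩ := Complex.exp_eq_exp_iff_exists_int.mp ht
  refine ⟨k, Complex.ofReal_injective (mul_left_cancel₀ I_ne_zero ?_)⟩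
  push_cast
  rw [hk]
  ring

theorem countable_setOf_sum_mul_cexp_eq_zero {ι : Type*} (s : Finset ι) (n : ι → ℤ) (c : ι → ℂ)
    (k : ℤ) (hk : ∑ i ∈ s with n i = k, c i ≠ 0) :
    {t : ℝ | ∑ i ∈ s, c i * cexp (I * (n i * t)) = 0}.Countable := by
  set ℓ : ℂ[T;T⁻¹] := ∑ i ∈ s, C (c i) * T (n i)
  have hℓ : ℓ ≠ 0 := by
    refine fun h => hk ?_
    have hcoeff := congrArg (fun f : ℂ[T;T⁻¹] => f.coeff k) h
    simpa [ℓ, ← single_eq_C_mul_T, AddMonoidAlgebra.coeff_sum, Finset.sum_filter,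
      Finsupp.single_apply] using hcoeff
  obtain ⟨N, p, hp⟩ := ℓ.exists_T_pow
  have hp0 : p ≠ 0 := by
    rintro rfl
    exact hℓ (((isUnit_T _).mul_left_eq_zero).mp (by simpa using hp.symm))
  let u : ℝ → ℂˣ := fun t => Units.mk0 (cexp (I * t)) (Complex.exp_ne_zero _)
  have heval : ∀ t : ℝ, eval₂ (RingHom.id ℂ) (u t) ℓ = ∑ i ∈ s, c i * cexp (I * (n i * t)) := by
    intro t
    simp [ℓ, eval₂_C_mul_T, u, ← Complex.exp_int_mul, mul_left_comm]
  refine ((p.roots.toFinset.countable_toSet).biUnion fun z _ =>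
    countable_setOf_cexp_mul_I_eq z).mono fun t ht => Set.mem_iUnion₂.mpr ⟨cexp (I * t), ?_, rfl⟩
  have hroot := congrArg (eval₂ (RingHom.id ℂ) (u t)) hp
  rw [eval₂_toLaurent, map_mul, heval, ht, zero_mul] at hroot
  simpa [Polynomial.mem_roots hp0, u] using hroot

noncomputable def expSum {ι : Type*} {m : ℕ} (s : Finset ι) (ν : ι → Fin m → ℤ) (c : ι → ℂ)
    (θ : Fin m → ℝ) : ℂ :=
  ∑ i ∈ s, c i * cexp (I * ∑ j, (ν i j : ℂ) * (θ j : ℂ))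

section
variable {ι : Type*} {m : ℕ}

theorem continuous_expSum (s : Finset ι) (ν : ι → Fin m → ℤ) (c : ι → ℂ) :
    Continuous (expSum s ν c) := by
  unfold expSum; fun_prop

theorem expSum_cons (s : Finset ι) (ν : ι → Fin (m + 1) → ℤ) (c : ι → ℂ) (t : ℝ)
    (θ : Fin m → ℝ) :
    expSum s ν c (Fin.cons t θ) =
      expSum s (fun i => Fin.tail (ν i)) (fun i => c i * cexp (I * (ν i 0 * t))) θ := by
  simp [expSum, Fin.sum_univ_succ, mul_add, Complex.exp_add, mul_assoc, Fin.tail]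

theorem sum_filter_tail_filter_head (s : Finset ι) (ν : ι → Fin (m + 1) → ℤ) (c : ι → ℂ)
    (d : Fin (m + 1) → ℤ) :
    ∑ i ∈ s.filter (fun i => Fin.tail (ν i) = Fin.tail d) with ν i 0 = d 0, c i =
      ∑ i ∈ s with ν i = d, c i := by
  rw [Finset.filter_filter]
  refine Finset.sum_congr (Finset.filter_congr fun i _ => ?_) fun _ _ => rfl
  rw [← Fin.cons_self_tail (ν i), ← Fin.cons_self_tail d, Fin.cons_inj]
  simp [and_comm]

end

theorem volume_eq_zero_of_ae_volume_cons_preimage {m : ℕ} {W : Set (Fin (m + 1) → ℝ)}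
    (hW : MeasurableSet W)
    (h : ∀ᵐ t : ℝ, volume (Fin.cons (α := fun _ => ℝ) t ⁻¹' W) = 0) :
    volume W = 0 := by
  have e := (volume_preserving_piFinSuccAbove (fun _ : Fin (m + 1) => ℝ) 0).symm
  rw [← e.measure_preimage hW.nullMeasurableSet, Measure.volume_eq_prod,
    Measure.measure_prod_null (hW.preimage e.measurable)]
  filter_upwards [h] with t ht
  simpa [Set.preimage, Fin.consEquiv] using ht

/-- The hypothesis says that the `d`-th Fourier coefficient is nonzero; the frequencies `ν i` may
repeat. -/
theorem volume_setOf_expSum_eq_zero {ι : Type*} : ∀ {m : ℕ} (s : Finset ι)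
    (ν : ι → Fin m → ℤ) (c : ι → ℂ) (d : Fin m → ℤ), ∑ i ∈ s with ν i = d, c i ≠ 0 →
    volume {θ | expSum s ν c θ = 0} = 0
  | 0, s, ν, c, d, hd => by
    have hconst : ∀ θ, expSum s ν c θ = ∑ i ∈ s with ν i = d, c i := by
      simp [expSum, Subsingleton.elim _ d]
    simp [hconst, hd]
  | m + 1, s, ν, c, d, hd => by
    refine volume_eq_zero_of_ae_volume_cons_preimage
      (measurableSet_eq_fun (continuous_expSum s ν c).measurable measurable_const) ?_
    have hbad := countable_setOf_sum_mul_cexp_eq_zero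
      (s.filter fun i => Fin.tail (ν i) = Fin.tail d) (fun i => ν i 0) c (d 0)
      (by rwa [sum_filter_tail_filter_head])
    filter_upwards [measure_eq_zero_iff_ae_notMem.mp (hbad.measure_zero volume)] with t ht
    simp only [Set.preimage_ofPred_eq, expSum_cons]
    exact volume_setOf_expSum_eq_zero s _ _ (Fin.tail d) ht

theorem conj_expSum_val {m : ℕ} {D : Finset (Fin m → ℤ)} (hsym : ∀ d ∈ D, -d ∈ D) {c : D → ℂ}
    (hc : ∀ (d : D) (h : -(d : Fin m → ℤ) ∈ D), c ⟨-(d : Fin m → ℤ), h⟩ = conj (c d))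
    (θ : Fin m → ℝ) :
    conj (expSum Finset.univ Subtype.val c θ) = expSum Finset.univ Subtype.val c θ := by
  let σ : D ≃ D := (Equiv.neg _).subtypeEquiv fun d => ⟨hsym d, fun h => by simpa using hsym _ h⟩
  rw [expSum, map_sum]
  refine Fintype.sum_equiv σ _ _ fun d => ?_
  simp [σ, hc d (hsym d d.2), ← Complex.exp_conj]

theorem continuousAt_measure_setOf_mem_and_neg {X α : Type*} [TopologicalSpace X]
    [FirstCountableTopology X] [MeasurableSpace α] {μ : Measure α} {S : Set α} (hS : μ S ≠ ⊤)
    {F : X → α → ℝ} {x : X} (hF : ∀ y, Measurable (F y))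
    (hFx : ∀ a, ContinuousAt (fun y => F y a) x) (hx : ∀ᵐ a ∂μ, F x a ≠ 0) :
    ContinuousAt (fun y => μ {a | a ∈ S ∧ F y a < 0}) x := by
  have : IsFiniteMeasure (μ.restrict S) := isFiniteMeasure_restrict.2 hS
  have hneg : ∀ y, MeasurableSet {a | F y a < 0} := fun y =>
    measurableSet_lt (hF y) measurable_const
  have hset : ∀ y,
      μ {a | a ∈ S ∧ F y a < 0} = ∫⁻ a, {a | F y a < 0}.indicator 1 a ∂μ.restrict S := by
    intro y
    rw [lintegral_indicator_one (hneg y), Measure.restrict_apply (hneg y), Set.inter_comm]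
    rfl
  simp_rw [ContinuousAt, hset]
  refine tendsto_lintegral_filter_of_dominated_convergence 1
    (Eventually.of_forall fun y => measurable_const.indicator (hneg y))
    (Eventually.of_forall fun y => ae_of_all _ fun a => Set.indicator_le_self _ _ a)
    (by simpa using hS) ?_
  filter_upwards [ae_restrict_of_ae hx] with a ha
  refine tendsto_nhds_of_eventually_eq ?_
  rcases ha.lt_or_gt with h | h
  · filter_upwards [(hFx a).eventually (gt_mem_nhds h)] with y hy
    simp [hy, h]
  · filter_upwards [(hFx a).eventually (lt_mem_nhds h)] with y hy
    simp [hy.not_gt, h.not_gt]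

theorem stmt_13_general (m : ℕ) (D : Finset (Fin m → ℤ))
    (hsym : ∀ d ∈ D, -d ∈ D) :
    ∀ c ∈ {c : ↥D → ℂ | ∀ (d : ↥D) (h : -(d : Fin m → ℤ) ∈ D),
        c ⟨-(d : Fin m → ℤ), h⟩ = conj (c d)}, c ≠ 0 →
      ContinuousWithinAt
        (fun c : ↥D → ℂ =>
          (volume {θ : Fin m → ℝ | (∀ i, θ i ∈ Set.Ico 0 (2*π)) ∧
            (∑ d : ↥D, c d * Complex.exp (Complex.I *
              ∑ i, ((d : Fin m → ℤ) i : ℂ) * (θ i : ℂ))).re < 0}).toReal / (2*π) ^ m)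
        {c : ↥D → ℂ | ∀ (d : ↥D) (h : -(d : Fin m → ℤ) ∈ D),
          c ⟨-(d : Fin m → ℤ), h⟩ = conj (c d)} c := by
  intro c hc hc0
  set box : Set (Fin m → ℝ) := {θ | ∀ i, θ i ∈ Set.Ico 0 (2 * π)}
  have hbox : volume box ≠ ⊤ :=
    ne_top_of_le_ne_top (measure_Icc_lt_top (a := 0) (b := fun _ => 2 * π)).ne
      (measure_mono fun θ hθ => ⟨fun i => (hθ i).1, fun i => (hθ i).2.le⟩)
  obtain ⟨d₀, hd₀⟩ := Function.ne_iff.mp hc0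
  have hzero : volume {θ | expSum Finset.univ Subtype.val c θ = 0} = 0 :=
    volume_setOf_expSum_eq_zero _ _ c d₀ (by simpa [Finset.filter_eq'] using hd₀)
  have hre : ∀ᵐ θ, (expSum Finset.univ Subtype.val c θ).re ≠ 0 := by
    filter_upwards [measure_eq_zero_iff_ae_notMem.mp hzero] with θ hθ hre
    exact hθ (Complex.ext hre (Complex.conj_eq_iff_im.mp (conj_expSum_val hsym hc θ)))
  have hcont : ContinuousAt (fun c' =>
      volume {θ | θ ∈ box ∧ (expSum Finset.univ Subtype.val c' θ).re < 0}) c :=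
    continuousAt_measure_setOf_mem_and_neg hbox
      (fun c => (Complex.continuous_re.comp (continuous_expSum _ _ c)).measurable)
      (fun θ => (Complex.continuous_re.comp <| continuous_finsetSum _ fun d _ =>
        (continuous_apply d).mul continuous_const).continuousAt) hre
  have hfin : volume {θ | θ ∈ box ∧ (expSum Finset.univ Subtype.val c θ).re < 0} ≠ ⊤ :=
    ne_top_of_le_ne_top hbox (measure_mono (Set.sep_subset _ _))
  exact (((ENNReal.tendsto_toReal hfin).comp hcont).div_const _).mono_left nhdsWithin_le_nhds

/-- For a finite symmetric `D ⊆ ℤ^m \ {0}` and coefficient vectors `c : D → ℂ` with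
`c₋d = conj(c_d)` (so that `f_c(θ) = Σ_{d ∈ D} c_d e^{i⟨d,θ⟩}` is real-valued), the map
`c ↦ ρ₋(f_c) = λ_m{θ ∈ [0,2π)^m : f_c(θ) < 0}/(2π)^m` is continuous, within the set of
such symmetric coefficient vectors, at every nonzero `c`. -/
theorem stmt_13 (m : ℕ) (hm : 1 ≤ m) (D : Finset (Fin m → ℤ)) (hne : D.Nonempty)
    (h0 : (fun _ => 0 : Fin m → ℤ) ∉ D) (hsym : ∀ d ∈ D, -d ∈ D) :
    ∀ c ∈ {c : ↥D → ℂ | ∀ (d : ↥D) (h : -(d : Fin m → ℤ) ∈ D),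
        c ⟨-(d : Fin m → ℤ), h⟩ = conj (c d)}, c ≠ 0 →
      ContinuousWithinAt
        (fun c : ↥D → ℂ =>
          (volume {θ : Fin m → ℝ | (∀ i, θ i ∈ Set.Ico 0 (2*π)) ∧
            (∑ d : ↥D, c d * Complex.exp (Complex.I *
              ∑ i, ((d : Fin m → ℤ) i : ℂ) * (θ i : ℂ))).re < 0}).toReal / (2*π) ^ m)
        {c : ↥D → ℂ | ∀ (d : ↥D) (h : -(d : Fin m → ℤ) ∈ D),
          c ⟨-(d : Fin m → ℤ), h⟩ = conj (c d)} c :=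
  stmt_13_general m D hsym
end

section
/- Let m ≥ 1, let D be a finite nonempty subset of ℤ^m \ {0} with D = −D, and let c : D → ℂ satisfy c_{−d} = conj(c_d) with not all c_d zero; let f(θ) = Σ_{d ∈ D} c_d e^{i(d₁θ₁ + … + d_mθ_m)}, a real-valued function on [0,2π)^m. For each n ∈ ℕ let B_n = {(2πa₁/2^n, …, 2πa_m/2^n) : a ∈ {0,1,…,2^n−1}^m} be the dyadic lattice of 2^{nm} points. Then as n → ∞: (i) |{p ∈ B_n : f(p) > 0}|/2^{nm} → (1/(2π)^m)·λ_m{θ ∈ [0,2π)^m : f(θ) > 0}; (ii) |{p ∈ B_n : f(p) < 0}|/2^{nm} → (1/(2π)^m)·λ_m{θ ∈ [0,2π)^m : f(θ) < 0}; (iii) |{p ∈ B_n : f(p) = 0}|/2^{nm} → 0. -/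
open MeasureTheory ComplexConjugate Filter
open scoped Real
open Set Topology
open scoped Pointwise

/-! The zero set of a trigonometric polynomial with a nonzero coefficient is Lebesgue-null: in one
variable it is the real trace of the zero set of an entire function which does not vanish
identically (characters are linearly independent), hence countable; Fubini then gives the general
case by induction on the dimension. As `c (-d) = conj (c d)`, the polynomial is real, so `{f = 0}`
is such a zero set. Consequently `{f > 0}`, `{f < 0}` and `{f = 0}`, cut down to the box
`[0, 2π)^m`, have null frontier, and for such a set the proportion of points of the grid
`(2π/N) ℤ^m` that it contains tends to its normalized volume; after rescaling by `2π` this is the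
lattice-point count `tendsto_card_div_pow_atTop_volume`. -/

theorem hasDerivAt_exp_I_mul (k : ℤ) :
    HasDerivAt (fun t : ℝ => Complex.exp (Complex.I * k * t)) (Complex.I * k) 0 := by
  simpa using ((hasDerivAt_id (0:ℝ)).ofReal_comp.const_mul (Complex.I * k)).cexp

noncomputable def expChar (k : ℤ) : Multiplicative ℝ →* ℂ where
  toFun t := Complex.exp (Complex.I * k * t.toAdd)
  map_one' := by simp
  map_mul' x y := by simp [mul_add, Complex.exp_add]

theorem expChar_injective : Function.Injective expChar := fun k l h => by
  have hkl : (fun t : ℝ => Complex.exp (Complex.I * k * t)) =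
      fun t : ℝ => Complex.exp (Complex.I * l * t) :=
    funext fun t => DFunLike.congr_fun h (Multiplicative.ofAdd t)
  have := (hasDerivAt_exp_I_mul k).unique (hkl ▸ hasDerivAt_exp_I_mul l)
  simpa using this

theorem volume_setOf_sum_exp_eq_zero {ι : Type*} {J : Finset ι} {a : ι → ℂ} {k : ι → ℤ} {k₀ : ℤ}
    (h : ∑ j ∈ J with k j = k₀, a j ≠ 0) :
    volume {t : ℝ | ∑ j ∈ J, a j * Complex.exp (Complex.I * k j * t) = 0} = 0 := by
  set H : ℂ → ℂ := fun z => ∑ j ∈ J, a j * Complex.exp (Complex.I * k j * z)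
  have hH : AnalyticOnNhd ℂ H univ := fun z _ => by fun_prop
  have hH_ne : ¬ EqOn H 0 univ := by
    intro hH0
    obtain ⟨j₀, hj₀⟩ := Finset.nonempty_of_sum_ne_zero h
    have li := (linearIndependent_monoidHom (Multiplicative ℝ) ℂ).comp expChar expChar_injective
    refine h (linearIndependent_iff'.1 li (J.image k) (fun l => ∑ j ∈ J with k j = l, a j) ?_ k₀
      (Finset.mem_image.2 ⟨j₀, (Finset.mem_filter.1 hj₀).1, (Finset.mem_filter.1 hj₀).2⟩))
    funext t
    have hHt : ∑ j ∈ J, a j * Complex.exp (Complex.I * k j * (Multiplicative.toAdd t : ℝ)) = 0 :=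
      hH0 (mem_univ _)
    rw [← Finset.sum_fiberwise_of_maps_to (fun j hj => Finset.mem_image_of_mem k hj)] at hHt
    simp only [Finset.sum_apply, Pi.smul_apply, Function.comp_apply, expChar, MonoidHom.coe_mk,
      OneHom.coe_mk, smul_eq_mul, Finset.sum_mul, Pi.zero_apply]
    refine (Finset.sum_congr rfl fun l _ => Finset.sum_congr rfl fun j hj => ?_).trans hHt
    rw [(Finset.mem_filter.1 hj).2]
  have hdisc : IsDiscrete ({z | H z = 0} ∩ univ) := isDiscrete_of_codiscreteWithin
    ((hH.eqOn_zero_or_eventually_ne_zero_of_preconnected isPreconnected_univ).resolve_left hH_ne)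
  have hcount : {z | H z = 0}.Countable := by
    simpa using (HereditarilyLindelofSpace.isLindelof _).countable_of_isDiscrete hdisc
  exact (hcount.preimage Complex.ofReal_injective).measure_zero _

theorem volume_eq_zero_of_ae_volume_cons_eq_zero {m : ℕ} {s : Set (Fin (m + 1) → ℝ)}
    (hs : MeasurableSet s) (h : ∀ᵐ θ : Fin m → ℝ, volume {t : ℝ | Fin.cons t θ ∈ s} = 0) :
    volume s = 0 := by
  set e := MeasurableEquiv.piFinSuccAbove (fun _ : Fin (m + 1) => ℝ) 0
  have he : MeasurePreserving e volume ((volume : Measure ℝ).prod volume) :=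
    volume_preserving_piFinSuccAbove _ 0
  have hs' : s = e ⁻¹' (e.symm ⁻¹' s) := by ext; simp
  rw [hs', he.measure_preimage_equiv, Measure.prod_apply_symm (e.symm.measurable hs)]
  refine (lintegral_congr_ae (h.mono fun θ hθ => ?_)).trans lintegral_zero
  simp only [e, MeasurableEquiv.piFinSuccAbove_symm_apply, Fin.insertNthEquiv_zero, Fin.consEquiv,
    Equiv.coe_fn_mk]
  exact hθ

theorem volume_setOf_sum_exp_eq_zero_pi {ι : Type*} :
    ∀ {m : ℕ} {J : Finset ι} {a : ι → ℂ} {k : ι → Fin m → ℤ} {k₀ : Fin m → ℤ},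
    ∑ j ∈ J with k j = k₀, a j ≠ 0 →
    volume {θ : Fin m → ℝ |
      ∑ j ∈ J, a j * Complex.exp (Complex.I * ∑ i, (k j i : ℂ) * (θ i : ℂ)) = 0} = 0
  | 0, J, a, k, k₀, h => by
    rw [Finset.filter_true_of_mem fun j _ => Subsingleton.elim (k j) k₀] at h
    simp [h]
  | m + 1, J, a, k, k₀, h => by
    refine volume_eq_zero_of_ae_volume_cons_eq_zero
      (isClosed_eq (by fun_prop) continuous_const).measurableSet ?_
    -- The slice at `θ` is a sum in one variable whose coefficient at the frequency `k₀ 0` is an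
    -- `m`-variable sum, nonzero for almost every `θ` by induction.
    have hslice : ∀ᵐ θ : Fin m → ℝ, ∑ j ∈ J with k j 0 = k₀ 0,
        a j * Complex.exp (Complex.I * ∑ i, (k j i.succ : ℂ) * (θ i : ℂ)) ≠ 0 := by
      refine ae_iff.2 ?_
      simp only [not_not]
      refine volume_setOf_sum_exp_eq_zero_pi (k := fun j => Fin.tail (k j)) (k₀ := Fin.tail k₀) ?_
      have hcond : ∀ j ∈ J, (k j 0 = k₀ 0 ∧ Fin.tail (k j) = Fin.tail k₀) ↔ k j = k₀ :=
        fun j _ => by simp only [funext_iff, Fin.forall_fin_succ, Fin.tail]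
      rwa [Finset.filter_filter, Finset.filter_congr hcond]
    refine hslice.mono fun θ hθ => ?_
    convert volume_setOf_sum_exp_eq_zero hθ using 2
    ext t
    simp only [mem_ofPred_eq, Fin.sum_univ_succ, Fin.cons_zero, Fin.cons_succ, mul_add,
      Complex.exp_add, ← mul_assoc]
    rw [Finset.sum_congr rfl fun j _ => mul_right_comm _ _ _]

theorem sum_exp_im_eq_zero {m : ℕ} {D : Finset (Fin m → ℤ)} (hsym : ∀ d ∈ D, -d ∈ D)
    {c : (Fin m → ℤ) → ℂ} (hc : ∀ d ∈ D, c (-d) = conj (c d)) (θ : Fin m → ℝ) :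
    (∑ d ∈ D, c d * Complex.exp (Complex.I * ∑ i, (d i : ℂ) * (θ i : ℂ))).im = 0 := by
  rw [← Complex.conj_eq_iff_im, map_sum]
  refine Finset.sum_nbij' Neg.neg Neg.neg hsym hsym (fun d _ => neg_neg d) (fun d _ => neg_neg d)
    fun d hd => ?_
  rw [map_mul, ← Complex.exp_conj, hc d hd]
  simp [map_sum, Finset.sum_neg_distrib]

open BoxIntegral.unitPartition in
theorem preimage_smul_inter_smul_span_eq_image {m N : ℕ} [NeZero N] {L : ℝ} (hL : 0 < L)
    {A : Set (Fin m → ℝ)} (hA : ∀ θ ∈ A, ∀ i, θ i ∈ Ico 0 L) :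
    (fun x => L • x) ⁻¹' A ∩
        (N : ℝ)⁻¹ • (Submodule.span ℤ (range (Pi.basisFun ℝ (Fin m))) : Set (Fin m → ℝ)) =
      (fun a i => ((a i : ℕ) : ℝ) / N) ''
        {a : Fin m → Fin N | (fun i => L * ((a i : ℕ) : ℝ) / N) ∈ A} := by
  have hN : (0 : ℝ) < N := Nat.cast_pos.2 (Nat.pos_of_neZero N)
  ext x
  simp only [← Submodule.coe_pointwise_smul, mem_inter_iff, mem_preimage, SetLike.mem_coe,
    mem_smul_span_iff, mem_image, mem_ofPred_eq]
  constructor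
  · rintro ⟨hxA, hx⟩
    choose z hz using hx
    simp only [eq_intCast] at hz
    have hcoord : ∀ i, ((z i).toNat : ℝ) = N * x i ∧ (z i).toNat < N := fun i => by
      have hxi := hA _ hxA i
      simp only [Pi.smul_apply, smul_eq_mul, mem_Ico] at hxi
      have h0 : (0 : ℤ) ≤ z i := by
        exact_mod_cast (hz i).symm ▸ mul_nonneg hN.le ((mul_nonneg_iff_of_pos_left hL).1 hxi.1)
      have h1 : z i < N := by
        exact_mod_cast (hz i).trans_lt ((mul_lt_iff_lt_one_right hN).2
          ((mul_lt_iff_lt_one_right hL).1 hxi.2))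
      refine ⟨?_, by omega⟩
      rw [← hz i]
      exact_mod_cast Int.toNat_of_nonneg h0
    refine ⟨fun i => ⟨(z i).toNat, (hcoord i).2⟩, ?_, ?_⟩
    · convert hxA using 1
      ext i
      simp only [(hcoord i).1, Pi.smul_apply, smul_eq_mul]
      field_simp
    · ext i
      simp only [(hcoord i).1]
      field_simp
  · rintro ⟨a, ha, rfl⟩
    refine ⟨?_, fun i => ⟨a i, ?_⟩⟩
    · convert ha using 1
      ext i
      simp [mul_div_assoc]
    · simp [mul_div_cancel₀ _ hN.ne']

theorem Convex.addHaar_frontier_inter {E : Type*} [NormedAddCommGroup E] [NormedSpace ℝ E]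
    [MeasurableSpace E] [BorelSpace E] [FiniteDimensional ℝ E] (μ : Measure E)
    [μ.IsAddHaarMeasure] {C U : Set E} (hC : Convex ℝ C) (hU : μ (frontier U) = 0) :
    μ (frontier (C ∩ U)) = 0 :=
  measure_mono_null (frontier_inter_subset C U) <| measure_union_null
    (measure_mono_null inter_subset_left (hC.addHaar_frontier μ))
    (measure_mono_null inter_subset_right hU)

theorem mul_natCast_div_mem_Ico {L : ℝ} (hL : 0 < L) {N : ℕ} (a : Fin N) :
    L * ((a : ℕ) : ℝ) / N ∈ Ico 0 L := by
  have hN : (0 : ℝ) < N := by exact_mod_cast a.pos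
  refine ⟨by positivity, (div_lt_iff₀ hN).2 ((mul_lt_mul_iff_right₀ hL).2 ?_)⟩
  exact_mod_cast a.isLt

theorem tendsto_card_grid_div_pow {m : ℕ} {L : ℝ} (hL : 0 < L) {P : (Fin m → ℝ) → Prop}
    [DecidablePred P] (hPm : MeasurableSet {θ | P θ}) (hPf : volume (frontier {θ | P θ}) = 0) :
    Tendsto (fun N : ℕ => ((Finset.univ.filter fun a : Fin m → Fin N =>
        P (fun i => L * ((a i : ℕ) : ℝ) / N)).card : ℝ) / (N : ℝ) ^ m)
      atTop (𝓝 (volume.real {θ | (∀ i, θ i ∈ Ico 0 L) ∧ P θ} / L ^ m)) := by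
  have hA : {θ | (∀ i, θ i ∈ Ico 0 L) ∧ P θ} = (univ.pi fun _ => Ico 0 L) ∩ {θ | P θ} := by
    ext; simp
  rw [hA]
  set A := (univ.pi fun _ => Ico 0 L) ∩ {θ | P θ}
  set s := (fun x : Fin m → ℝ => L • x) ⁻¹' A
  have hAm : MeasurableSet A := (MeasurableSet.univ_pi fun _ => measurableSet_Ico).inter hPm
  have hAf : volume (frontier A) = 0 :=
    (convex_pi fun _ _ => convex_Ico 0 L).addHaar_frontier_inter volume hPf
  have hs_bdd : Bornology.IsBounded s := by
    refine (Metric.isBounded_Icc (0 : Fin m → ℝ) 1).subset fun x hx => ?_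
    have hxi := fun i => hx.1 i (mem_univ i)
    simp only [Pi.smul_apply, smul_eq_mul, mem_Ico] at hxi
    exact ⟨fun i => (mul_nonneg_iff_of_pos_left hL).1 (hxi i).1,
      fun i => ((mul_lt_iff_lt_one_right hL).1 (hxi i).2).le⟩
  have hs_meas : MeasurableSet s := hAm.preimage (measurable_const_smul L)
  have hs_front : volume (frontier s) = 0 := by
    change volume (frontier (Homeomorph.smulOfNeZero L hL.ne' ⁻¹' A)) = 0
    rw [← Homeomorph.preimage_frontier]
    simp [Measure.addHaar_preimage_smul volume hL.ne', hAf]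
  have hs_vol : volume.real s = volume.real A / L ^ m := by
    simp [measureReal_def, s, Measure.addHaar_preimage_smul volume hL.ne', ENNReal.toReal_mul,
      abs_of_pos hL, div_eq_inv_mul, (pow_pos hL m).le]
  rw [← hs_vol]
  refine (tendsto_card_div_pow_atTop_volume s hs_bdd hs_meas hs_front).congr' ?_
  filter_upwards [eventually_ne_atTop 0] with N hN
  have : NeZero N := ⟨hN⟩
  have hN0 : (N : ℝ) ≠ 0 := Nat.cast_ne_zero.2 hN
  have hinj : Function.Injective fun (a : Fin m → Fin N) i => ((a i : ℕ) : ℝ) / N :=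
    fun a b hab => funext fun i => Fin.ext <| by
      exact_mod_cast (div_left_inj' hN0).1 (congrFun hab i)
  have hgrid : {a : Fin m → Fin N | (fun i => L * ((a i : ℕ) : ℝ) / N) ∈ A} =
      ↑(Finset.univ.filter fun a : Fin m → Fin N => P (fun i => L * ((a i : ℕ) : ℝ) / N)) := by
    ext a
    simp [A, mul_natCast_div_mem_Ico hL]
  rw [preimage_smul_inter_smul_span_eq_image hL fun θ hθ i => hθ.1 i (mem_univ i),
    Nat.card_image_of_injective hinj, hgrid, Nat.card_coe_set_eq, Set.ncard_coe_finset,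
    Fintype.card_fin]

theorem tendsto_card_dyadic_grid_div_pow {m : ℕ} {P : (Fin m → ℝ) → Prop} [DecidablePred P]
    (hPm : MeasurableSet {θ | P θ}) (hPf : volume (frontier {θ | P θ}) = 0) :
    Tendsto (fun n : ℕ =>
        ((Finset.univ.filter fun a : Fin m → Fin (2 ^ n) =>
          P (fun i => 2 * π * ((a i : ℕ) : ℝ) / 2 ^ n)).card : ℝ) / 2 ^ (n * m))
      atTop (𝓝 ((volume {θ : Fin m → ℝ | (∀ i, θ i ∈ Ico 0 (2 * π)) ∧ P θ}).toReal /
        (2 * π) ^ m)) := by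
  have := (tendsto_card_grid_div_pow Real.two_pi_pos hPm hPf).comp
    (tendsto_pow_atTop_atTop_of_one_lt one_lt_two)
  simpa [Function.comp_def, pow_mul, measureReal_def] using this

theorem stmt_14_general (m : ℕ) (D : Finset (Fin m → ℤ))
    (hsym : ∀ d ∈ D, -d ∈ D)
    (c : (Fin m → ℤ) → ℂ) (hc : ∀ d ∈ D, c (-d) = conj (c d))
    (hcne : ∃ d ∈ D, c d ≠ 0)
    (f : (Fin m → ℝ) → ℝ)
    (hf : ∀ θ, f θ = (∑ d ∈ D, c d * Complex.exp (Complex.I *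
      ∑ i, (d i : ℂ) * (θ i : ℂ))).re) :
    Tendsto (fun n : ℕ =>
        ((Finset.univ.filter fun a : Fin m → Fin (2 ^ n) =>
          0 < f (fun i => 2 * π * ((a i : ℕ) : ℝ) / 2 ^ n)).card : ℝ) / 2 ^ (n * m))
      atTop (nhds ((volume {θ : Fin m → ℝ |
        (∀ i, θ i ∈ Set.Ico 0 (2*π)) ∧ 0 < f θ}).toReal / (2*π) ^ m)) ∧
    Tendsto (fun n : ℕ =>
        ((Finset.univ.filter fun a : Fin m → Fin (2 ^ n) =>
          f (fun i => 2 * π * ((a i : ℕ) : ℝ) / 2 ^ n) < 0).card : ℝ) / 2 ^ (n * m))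
      atTop (nhds ((volume {θ : Fin m → ℝ |
        (∀ i, θ i ∈ Set.Ico 0 (2*π)) ∧ f θ < 0}).toReal / (2*π) ^ m)) ∧
    Tendsto (fun n : ℕ =>
        ((Finset.univ.filter fun a : Fin m → Fin (2 ^ n) =>
          f (fun i => 2 * π * ((a i : ℕ) : ℝ) / 2 ^ n) = 0).card : ℝ) / 2 ^ (n * m))
      atTop (nhds 0) := by
  have hfc : Continuous f := by
    rw [funext hf]
    fun_prop
  have hZ : volume {θ | f θ = 0} = 0 := by
    obtain ⟨d₀, hd₀, hc₀⟩ := hcne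
    have hfS : {θ | f θ = 0} = {θ | ∑ d ∈ D, c d * Complex.exp (Complex.I *
        ∑ i, (d i : ℂ) * (θ i : ℂ)) = 0} := by
      ext θ
      simp only [mem_ofPred_eq, hf, Complex.ext_iff, sum_exp_im_eq_zero hsym hc θ, Complex.zero_re,
        Complex.zero_im, and_true]
    rw [hfS]
    refine volume_setOf_sum_exp_eq_zero_pi (k := fun d => d) (k₀ := d₀) ?_
    rwa [Finset.filter_eq', if_pos hd₀, Finset.sum_singleton]
  have hnull : ∀ U : Set (Fin m → ℝ), frontier U ⊆ {θ | f θ = 0} → volume (frontier U) = 0 :=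
    fun U hU => measure_mono_null hU hZ
  refine ⟨tendsto_card_dyadic_grid_div_pow (P := fun θ => 0 < f θ)
      (measurableSet_lt measurable_const hfc.measurable)
      (hnull _ fun θ hθ => (frontier_lt_subset_eq continuous_const hfc hθ).symm),
    tendsto_card_dyadic_grid_div_pow (P := fun θ => f θ < 0)
      (measurableSet_lt hfc.measurable measurable_const)
      (hnull _ (frontier_lt_subset_eq hfc continuous_const)), ?_⟩
  have h := tendsto_card_dyadic_grid_div_pow (P := fun θ => f θ = 0)
    (measurableSet_eq_fun hfc.measurable measurable_const)
    (hnull _ (isClosed_eq hfc continuous_const).frontier_subset)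
  rwa [measure_mono_null (fun θ hθ => hθ.2) hZ, ENNReal.toReal_zero, zero_div] at h

/-- For a real-valued trigonometric polynomial `f(θ) = Σ_{d ∈ D} c_d e^{i⟨d,θ⟩}` with
symmetric `D ⊆ ℤ^m \ {0}`, `c₋d = conj(c_d)` and not all coefficients zero, the fractions
of points of the dyadic lattice `B_n = {2πa/2^n : a ∈ {0,…,2^n−1}^m}` where `f > 0`,
`f < 0`, `f = 0` converge respectively to `λ_m{f > 0}/(2π)^m`, `λ_m{f < 0}/(2π)^m`, `0`. -/
theorem stmt_14 (m : ℕ) (hm : 1 ≤ m) (D : Finset (Fin m → ℤ)) (hne : D.Nonempty)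
    (h0 : (fun _ => 0 : Fin m → ℤ) ∉ D) (hsym : ∀ d ∈ D, -d ∈ D)
    (c : (Fin m → ℤ) → ℂ) (hc : ∀ d ∈ D, c (-d) = conj (c d))
    (hcne : ∃ d ∈ D, c d ≠ 0)
    (f : (Fin m → ℝ) → ℝ)
    (hf : ∀ θ, f θ = (∑ d ∈ D, c d * Complex.exp (Complex.I *
      ∑ i, (d i : ℂ) * (θ i : ℂ))).re) :
    Tendsto (fun n : ℕ =>
        ((Finset.univ.filter fun a : Fin m → Fin (2 ^ n) =>
          0 < f (fun i => 2 * π * ((a i : ℕ) : ℝ) / 2 ^ n)).card : ℝ) / 2 ^ (n * m))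
      atTop (nhds ((volume {θ : Fin m → ℝ |
        (∀ i, θ i ∈ Set.Ico 0 (2*π)) ∧ 0 < f θ}).toReal / (2*π) ^ m)) ∧
    Tendsto (fun n : ℕ =>
        ((Finset.univ.filter fun a : Fin m → Fin (2 ^ n) =>
          f (fun i => 2 * π * ((a i : ℕ) : ℝ) / 2 ^ n) < 0).card : ℝ) / 2 ^ (n * m))
      atTop (nhds ((volume {θ : Fin m → ℝ |
        (∀ i, θ i ∈ Set.Ico 0 (2*π)) ∧ f θ < 0}).toReal / (2*π) ^ m)) ∧
    Tendsto (fun n : ℕ =>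
        ((Finset.univ.filter fun a : Fin m → Fin (2 ^ n) =>
          f (fun i => 2 * π * ((a i : ℕ) : ℝ) / 2 ^ n) = 0).card : ℝ) / 2 ^ (n * m))
      atTop (nhds 0) :=
  stmt_14_general m D hsym c hc hcne f hf
end
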